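/- arXiv:0809.1163 — 4 statements merged into one kernel-verified Lean document; each statement's English description precedes it below -/
import Mathlib

section
/- With J_t as above and d = n−t+1, for 1 ≤ ℓ ≤ 2d, the number ν_ℓ of monomials in the minimal generating set G(J_t) whose largest variable index is ℓ equals binom(t+ℓ−2, t−1). -/
/-!
Once the largest index `ℓ` of a generator is at most `2d`, no variable `z_j` with `j > 2d` occurs,
so the constraint on the `j`-indices is vacuous and `G(J_t)` contributes exactly the degree-`t`
monomials in `z_1, …, z_ℓ` divisible by `z_ℓ`. Dividing by `z_ℓ` identifies these with all
monomials of degree `t - 1` in `ℓ` variables, counted by stars and bars.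
-/

open Finsupp

/-- `transversalGen t d a` says that the exponent vector `a : ℕ →₀ ℕ` (variable indices
`1, …, 2d+t−1`) encodes a monomial in the minimal generating set `G(J_t)`, i.e. a monomial
`z_{i_1}⋯z_{i_q}·z_{j_1}⋯z_{j_r}·z_{k_1}⋯z_{k_s}` with
`1 ≤ i_1 ≤ ⋯ ≤ i_q ≤ d`, `2d+1 ≤ j_1 ≤ ⋯ ≤ j_r ≤ 2d+t−1−q`,
`d+1 ≤ k_1 ≤ ⋯ ≤ k_s ≤ 2d` and `q + r + s = t`. -/
def transversalGen (t d : ℕ) (a : ℕ →₀ ℕ) : Prop :=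
  a.support ⊆ Finset.Icc 1 (2 * d + t - 1) ∧
  (a.sum fun _ m => m) = t ∧
  ∀ ℓ ∈ a.support, 2 * d + 1 ≤ ℓ → ℓ ≤ 2 * d + t - 1 - (∑ ℓ' ∈ Finset.Icc 1 d, a ℓ')

theorem Finset.sup_id_eq_iff_of_ne_bot {α : Type*} [LinearOrder α] [OrderBot α] {s : Finset α}
    {a : α} (ha : a ≠ ⊥) : s.sup id = a ↔ a ∈ s ∧ ∀ x ∈ s, x ≤ a := by
  constructor
  · rintro rfl
    have hs : s.Nonempty := by
      by_contra hs
      simp_all [Finset.not_nonempty_iff_eq_empty]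
    obtain ⟨x, hx, hsup⟩ := s.exists_mem_eq_sup hs id
    exact ⟨hsup ▸ hx, fun y hy => Finset.le_sup (f := id) hy⟩
  · rintro ⟨has, hle⟩
    exact le_antisymm (Finset.sup_le hle) (Finset.le_sup (f := id) has)

theorem Finset.filter_mem_support_finsuppAntidiag_succ {ι : Type*} [DecidableEq ι]
    {s : Finset ι} {i : ι} (hi : i ∈ s) (k : ℕ) :
    {a ∈ s.finsuppAntidiag (k + 1) | i ∈ a.support}
      = (s.finsuppAntidiag k).map (addRightEmbedding (single i 1)) := by
  ext a
  simp only [Finset.mem_filter, Finset.mem_map, Finset.mem_finsuppAntidiag',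
    addRightEmbedding_apply]
  constructor
  · rintro ⟨⟨hsum, hsupp⟩, hia⟩
    have hle : single i 1 ≤ a :=
      single_le_iff.mpr (Nat.one_le_iff_ne_zero.mpr (mem_support_iff.mp hia))
    refine ⟨a - single i 1, ⟨?_, (support_tsub).trans hsupp⟩, tsub_add_cancel_of_le hle⟩
    have hdeg := congrArg degree (tsub_add_cancel_of_le hle)
    rw [map_add, degree_single] at hdeg
    exact Nat.add_right_cancel (hdeg.trans hsum)
  · rintro ⟨b, ⟨hsum, hsupp⟩, rfl⟩
    refine ⟨⟨?_, support_add.trans (Finset.union_subset hsupp ?_)⟩, ?_⟩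
    · change (b + single i 1).degree = k + 1
      rw [map_add, degree_single]
      exact congrArg (· + 1) hsum
    · simpa using hi
    · simp

theorem Finset.card_filter_mem_support_finsuppAntidiag_succ {ι : Type*} [DecidableEq ι]
    {s : Finset ι} {i : ι} (hi : i ∈ s) (k : ℕ) :
    ({a ∈ s.finsuppAntidiag (k + 1) | i ∈ a.support}).card = (s.card + k - 1).choose k := by
  rw [filter_mem_support_finsuppAntidiag_succ hi, card_map, card_finsuppAntidiag_nat_eq_choose]

theorem transversalGen_and_sup_eq_iff {t d ℓ : ℕ} (ht : 1 ≤ t) (hℓ1 : 1 ≤ ℓ) (hℓ2 : ℓ ≤ 2 * d)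
    (a : ℕ →₀ ℕ) :
    transversalGen t d a ∧ a.support.sup id = ℓ
      ↔ a ∈ {a ∈ (Finset.Icc 1 ℓ).finsuppAntidiag t | ℓ ∈ a.support} := by
  rw [Finset.mem_filter, Finset.sup_id_eq_iff_of_ne_bot (Nat.one_le_iff_ne_zero.mp hℓ1),
    Finset.mem_finsuppAntidiag']
  constructor
  · rintro ⟨⟨hsupp, hsum, -⟩, hℓ, hle⟩
    exact ⟨⟨hsum, fun x hx => Finset.mem_Icc.mpr ⟨(Finset.mem_Icc.mp (hsupp hx)).1, hle x hx⟩⟩, hℓ⟩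
  · rintro ⟨⟨hsum, hsupp⟩, hℓ⟩
    have hbound : ∀ x ∈ a.support, 1 ≤ x ∧ x ≤ ℓ := fun x hx => Finset.mem_Icc.mp (hsupp hx)
    refine ⟨⟨fun x hx => Finset.mem_Icc.mpr ?_, hsum, fun x hx _ => ?_⟩, hℓ,
      fun x hx => (hbound x hx).2⟩ <;> have := hbound x hx <;> omega

theorem nu_small_index_general (t d ℓ : ℕ) (ht : 1 ≤ t)
    (hℓ1 : 1 ≤ ℓ) (hℓ2 : ℓ ≤ 2 * d) :
    Nat.card {a : ℕ →₀ ℕ // transversalGen t d a ∧ a.support.sup id = ℓ}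
      = (t + ℓ - 2).choose (t - 1) := by
  obtain ⟨k, rfl⟩ : ∃ k, t = k + 1 := ⟨t - 1, by omega⟩
  have hℓ : ℓ ∈ Finset.Icc 1 ℓ := Finset.mem_Icc.mpr ⟨hℓ1, le_rfl⟩
  rw [Nat.card_congr (Equiv.subtypeEquivRight (transversalGen_and_sup_eq_iff ht hℓ1 hℓ2)),
    Nat.card_eq_finsetCard, Finset.card_filter_mem_support_finsuppAntidiag_succ hℓ, Nat.card_Icc]
  congr 1; omega

/-- Lemma 3.3(a): for `1 ≤ ℓ ≤ 2d` (with `d = n−t+1`), the number `ν_ℓ` of monomials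
in the minimal generating set `G(J_t)` whose largest variable index is `ℓ` equals
`C(t+ℓ−2, t−1)`. -/
theorem nu_small_index (n t d ℓ : ℕ) (ht : 1 ≤ t) (htn : t ≤ n) (hd : d = n - t + 1)
    (hℓ1 : 1 ≤ ℓ) (hℓ2 : ℓ ≤ 2 * d) :
    Nat.card {a : ℕ →₀ ℕ // transversalGen t d a ∧ a.support.sup id = ℓ}
      = (t + ℓ - 2).choose (t - 1) :=
  nu_small_index_general t d ℓ ht hℓ1 hℓ2
end

section
/- For d = n−t+1 and 1 ≤ j ≤ t−1, the combinatorial identity Σ_{k=0}^{t−j−1} binom(n−t+j+k, k)·binom(n−k−1, n−t) = Σ_{τ=1}^{n−t+1} binom(n, t−j−τ)·binom(n−t+j, j+τ−1) holds. -/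
lemma hock (m j : ℕ) : ∑ k ∈ Finset.range (m+1), (j+k).choose k = (m+j+1).choose m := by
  induction m with
  | zero => simp
  | succ m ih =>
    rw [Finset.sum_range_succ, ih, show j + (m+1) = m+j+1 by omega,
      show m+1+j+1 = (m+j+1)+1 by omega]
    rw [Nat.choose_succ_succ (m+j+1) m]

lemma aux (m : ℕ) : ∀ j d : ℕ,
    ∑ k ∈ Finset.range m, (d+j+k).choose k * (m+j+d-1-k).choose d
      = ∑ s ∈ Finset.range m, (m+j+d).choose s * (d+j).choose (m+j-1-s) := by
  induction m with
  | zero => intro j d; simp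
  | succ m ih =>
    intro j d
    match d with
    | 0 =>
      simp only [Nat.add_zero, Nat.zero_add, Nat.choose_zero_right, Nat.mul_one]
      rw [hock m j]
      rw [Finset.sum_eq_single m]
      · rw [show m+1+j-1-m = j by omega, Nat.choose_self, Nat.mul_one,
          show m+1+j = m+j+1 by omega]
      · intro s hs hne
        rw [Finset.mem_range] at hs
        rw [Nat.choose_eq_zero_of_lt (show j < m+1+j-1-s by omega), Nat.mul_zero]
      · intro h; exact absurd (Finset.self_mem_range_succ m) h
    | e+1 =>
      -- LHS split via Pascal on the second factor
      have hL : ∑ k ∈ Finset.range (m+1), (e+1+j+k).choose k * (m+1+j+(e+1)-1-k).choose (e+1)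
          = (∑ k ∈ Finset.range (m+1), (e+1+j+k).choose k * (m+j+e-k).choose e)
            + ∑ k ∈ Finset.range (m+1), (e+1+j+k).choose k * (m+j+e-k).choose (e+1) := by
        rw [← Finset.sum_add_distrib]
        apply Finset.sum_congr rfl
        intro k hk
        rw [Finset.mem_range] at hk
        rw [show m+1+j+(e+1)-1-k = (m+j+e-k)+1 by omega, Nat.choose_succ_succ, Nat.mul_add]
      rw [hL]
      -- first sum: peel k = m, identify with the (j+1, e) instance, use ih
      have h2 : ∑ k ∈ Finset.range (m+1), (e+1+j+k).choose k * (m+j+e-k).choose e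
          = (∑ s ∈ Finset.range m, (m+j+e+1).choose s * (e+1+j).choose (m+j-s))
            + (m+j+e+1).choose m * (j+e).choose e := by
        rw [Finset.sum_range_succ]
        congr 1
        · calc ∑ k ∈ Finset.range m, (e+1+j+k).choose k * (m+j+e-k).choose e
              = ∑ k ∈ Finset.range m, (e+(j+1)+k).choose k * (m+(j+1)+e-1-k).choose e := by
                apply Finset.sum_congr rfl; intro k hk; rw [Finset.mem_range] at hk
                rw [show e+1+j+k = e+(j+1)+k by omega, show m+j+e-k = m+(j+1)+e-1-k by omega]
            _ = ∑ s ∈ Finset.range m, (m+(j+1)+e).choose s * (e+(j+1)).choose (m+(j+1)-1-s) :=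
                ih (j+1) e
            _ = ∑ s ∈ Finset.range m, (m+j+e+1).choose s * (e+1+j).choose (m+j-s) := by
                apply Finset.sum_congr rfl; intro s hs; rw [Finset.mem_range] at hs
                rw [show m+(j+1)+e = m+j+e+1 by omega, show e+(j+1) = e+1+j by omega,
                  show m+(j+1)-1-s = m+j-s by omega]
        · rw [show e+1+j+m = m+j+e+1 by omega, show m+j+e-m = j+e by omega]
      -- second sum: peel k = m, identify with the (j, e+1) instance, use ih
      have h1 : ∑ k ∈ Finset.range (m+1), (e+1+j+k).choose k * (m+j+e-k).choose (e+1)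
          = (∑ s ∈ Finset.range m, (m+j+e+1).choose s * (e+1+j).choose (m+j-1-s))
            + (m+j+e+1).choose m * (j+e).choose (e+1) := by
        rw [Finset.sum_range_succ]
        congr 1
        · calc ∑ k ∈ Finset.range m, (e+1+j+k).choose k * (m+j+e-k).choose (e+1)
              = ∑ k ∈ Finset.range m, ((e+1)+j+k).choose k * (m+j+(e+1)-1-k).choose (e+1) := by
                apply Finset.sum_congr rfl; intro k hk; rw [Finset.mem_range] at hk
                rw [show m+j+e-k = m+j+(e+1)-1-k by omega]
            _ = ∑ s ∈ Finset.range m, (m+j+(e+1)).choose s * ((e+1)+j).choose (m+j-1-s) :=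
                ih j (e+1)
            _ = ∑ s ∈ Finset.range m, (m+j+e+1).choose s * (e+1+j).choose (m+j-1-s) := by
                apply Finset.sum_congr rfl; intro s hs
                rw [show m+j+(e+1) = m+j+e+1 by omega]
        · rw [show e+1+j+m = m+j+e+1 by omega, show m+j+e-m = j+e by omega]
      rw [h1, h2]
      -- the auxiliary full sum, computed two ways
      have hCsum1 : ∑ s ∈ Finset.range (m+1), (m+j+e+1).choose s * (e+1+j).choose (m+j-s)
          = (∑ s ∈ Finset.range m, (m+j+e+1).choose (s+1) * (e+1+j).choose (m+j-1-s))
            + (e+1+j).choose (m+j) := by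
        rw [Finset.sum_range_succ']
        congr 1
        · apply Finset.sum_congr rfl; intro s hs
          rw [show m+j-(s+1) = m+j-1-s by omega]
        · simp
      have hCsum2 : ∑ s ∈ Finset.range (m+1), (m+j+e+1).choose s * (e+1+j).choose (m+j-s)
          = (∑ s ∈ Finset.range m, (m+j+e+1).choose s * (e+1+j).choose (m+j-s))
            + (m+j+e+1).choose m * (e+1+j).choose j := by
        rw [Finset.sum_range_succ, show m+j-m = j by omega]
      -- the RHS split
      have hRHS : ∑ s ∈ Finset.range (m+1), (m+1+j+(e+1)).choose s * (e+1+j).choose (m+1+j-1-s)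
          = (∑ s ∈ Finset.range m, (m+j+e+1).choose s * (e+1+j).choose (m+j-1-s))
            + ((∑ s ∈ Finset.range m, (m+j+e+1).choose (s+1) * (e+1+j).choose (m+j-1-s))
              + (e+1+j).choose (m+j)) := by
        calc ∑ s ∈ Finset.range (m+1), (m+1+j+(e+1)).choose s * (e+1+j).choose (m+1+j-1-s)
            = ∑ s ∈ Finset.range (m+1), ((m+j+e+1)+1).choose s * (e+1+j).choose (m+j-s) := by
              apply Finset.sum_congr rfl; intro s hs
              rw [show m+1+j+(e+1) = (m+j+e+1)+1 by omega, show m+1+j-1-s = m+j-s by omega]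
          _ = (∑ s ∈ Finset.range m, ((m+j+e+1)+1).choose (s+1) * (e+1+j).choose (m+j-(s+1)))
              + ((m+j+e+1)+1).choose 0 * (e+1+j).choose (m+j-0) := Finset.sum_range_succ' _ m
          _ = (∑ s ∈ Finset.range m,
                ((m+j+e+1).choose s * (e+1+j).choose (m+j-1-s)
                  + (m+j+e+1).choose (s+1) * (e+1+j).choose (m+j-1-s)))
              + (e+1+j).choose (m+j) := by
              congr 1
              · apply Finset.sum_congr rfl; intro s hs
                rw [show m+j-(s+1) = m+j-1-s by omega, Nat.choose_succ_succ, Nat.add_mul]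
              · simp
          _ = _ := by rw [Finset.sum_add_distrib, Nat.add_assoc]
      rw [hRHS]
      have key : (∑ s ∈ Finset.range m, (m+j+e+1).choose (s+1) * (e+1+j).choose (m+j-1-s))
            + (e+1+j).choose (m+j)
          = (∑ s ∈ Finset.range m, (m+j+e+1).choose s * (e+1+j).choose (m+j-s))
            + (m+j+e+1).choose m * (e+1+j).choose j := hCsum1.symm.trans hCsum2
      rw [key]
      have hsymm := Nat.choose_symm (Nat.le_add_right (e+1) j)
      rw [Nat.add_sub_cancel_left] at hsymm
      have hpascal : (j+e).choose e + (j+e).choose (e+1) = (e+1+j).choose (e+1) := by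
        rw [← Nat.choose_succ_succ]
        congr 1 <;> omega
      have hab : (m+j+e+1).choose m * (j+e).choose e + (m+j+e+1).choose m * (j+e).choose (e+1)
          = (m+j+e+1).choose m * (e+1+j).choose j := by
        rw [← Nat.mul_add, hpascal, ← hsymm]
      rw [← hab]
      ring

lemma reindex (m j d : ℕ) :
    ∑ τ ∈ Finset.Icc 1 (d+1),
        (if τ ≤ m then (m+j+d).choose (m-τ) else 0) * (d+j).choose (j+τ-1)
      = ∑ s ∈ Finset.range m, (m+j+d).choose s * (d+j).choose (m+j-1-s) := by
  have e0 : ∑ τ ∈ Finset.Icc 1 (d+1),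
        (if τ ≤ m then (m+j+d).choose (m-τ) else 0) * (d+j).choose (j+τ-1)
      = ∑ i ∈ Finset.range (d+1),
          (if i+1 ≤ m then (m+j+d).choose (m-1-i) else 0) * (d+j).choose (j+i) := by
    rw [← Finset.Ico_add_one_right_eq_Icc, Finset.sum_Ico_eq_sum_range, show d+1+1-1 = d+1 by omega]
    apply Finset.sum_congr rfl
    intro i hi
    rw [show 1+i = i+1 by omega, show m-(i+1) = m-1-i by omega,
      show j+(i+1)-1 = j+i by omega]
  have e1 : ∑ i ∈ Finset.range (d+1),
        (if i+1 ≤ m then (m+j+d).choose (m-1-i) else 0) * (d+j).choose (j+i)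
      = ∑ i ∈ Finset.range (max (d+1) m),
          (if i+1 ≤ m then (m+j+d).choose (m-1-i) else 0) * (d+j).choose (j+i) := by
    apply Finset.sum_subset (Finset.range_subset_range.2 (le_max_left _ _))
    intro i hi hni
    rw [Finset.mem_range] at hi hni
    rw [Nat.choose_eq_zero_of_lt (show d+j < j+i by omega), Nat.mul_zero]
  have e2 : ∑ i ∈ Finset.range (max (d+1) m),
        (if i+1 ≤ m then (m+j+d).choose (m-1-i) else 0) * (d+j).choose (j+i)
      = ∑ i ∈ Finset.range m,
          (if i+1 ≤ m then (m+j+d).choose (m-1-i) else 0) * (d+j).choose (j+i) := by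
    symm
    apply Finset.sum_subset (Finset.range_subset_range.2 (le_max_right _ _))
    intro i hi hni
    rw [Finset.mem_range] at hni
    rw [if_neg (by omega), Nat.zero_mul]
  have e3 : ∑ i ∈ Finset.range m,
        (if i+1 ≤ m then (m+j+d).choose (m-1-i) else 0) * (d+j).choose (j+i)
      = ∑ i ∈ Finset.range m, (m+j+d).choose (m-1-i) * (d+j).choose (j+i) := by
    apply Finset.sum_congr rfl
    intro i hi
    rw [Finset.mem_range] at hi
    rw [if_pos (by omega)]
  have e4 : ∑ s ∈ Finset.range m, (m+j+d).choose s * (d+j).choose (m+j-1-s)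
      = ∑ i ∈ Finset.range m, (m+j+d).choose (m-1-i) * (d+j).choose (j+i) := by
    rw [← Finset.sum_range_reflect (fun s => (m+j+d).choose s * (d+j).choose (m+j-1-s)) m]
    apply Finset.sum_congr rfl
    intro i hi
    rw [Finset.mem_range] at hi
    rw [show m+j-1-(m-1-i) = j+i by omega]
  rw [e0, e1, e2, e3, ← e4]

/-- The combinatorial identity behind the first and third expressions for `ν_ℓ` in
Lemma 3.3(b): for `1 ≤ j ≤ t − 1` and `t ≤ n`,
`∑_{k=0}^{t−j−1} C(n−t+j+k, k)·C(n−k−1, n−t)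
  = ∑_{τ=1}^{n−t+1} C(n, t−j−τ)·C(n−t+j, j+τ−1)`,
with the convention that `C(n, t−j−τ) = 0` when `t − j − τ < 0`. -/
theorem nu_first_eq_third (n t j : ℕ) (htn : t ≤ n) (hj1 : 1 ≤ j) (hj2 : j ≤ t - 1) :
    ∑ k ∈ Finset.range (t - j), (n - t + j + k).choose k * (n - k - 1).choose (n - t)
      = ∑ τ ∈ Finset.Icc 1 (n - t + 1),
          (if τ ≤ t - j then n.choose (t - j - τ) else 0) * (n - t + j).choose (j + τ - 1) := by
  calc ∑ k ∈ Finset.range (t-j), (n-t+j+k).choose k * (n-k-1).choose (n-t)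
      = ∑ k ∈ Finset.range (t-j),
          ((n-t)+j+k).choose k * ((t-j)+j+(n-t)-1-k).choose (n-t) := by
        apply Finset.sum_congr rfl
        intro k hk
        rw [Finset.mem_range] at hk
        rw [show n-k-1 = (t-j)+j+(n-t)-1-k by omega]
    _ = ∑ s ∈ Finset.range (t-j),
          ((t-j)+j+(n-t)).choose s * ((n-t)+j).choose ((t-j)+j-1-s) := aux (t-j) j (n-t)
    _ = ∑ τ ∈ Finset.Icc 1 ((n-t)+1),
          (if τ ≤ t-j then ((t-j)+j+(n-t)).choose ((t-j)-τ) else 0)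
            * ((n-t)+j).choose (j+τ-1) := (reindex (t-j) j (n-t)).symm
    _ = ∑ τ ∈ Finset.Icc 1 (n-t+1),
          (if τ ≤ t-j then n.choose (t-j-τ) else 0) * (n-t+j).choose (j+τ-1) := by
        apply Finset.sum_congr rfl
        intro τ hτ
        rw [show (t-j)+j+(n-t) = n by omega]
end

section
/- For 1 ≤ j ≤ t−1 and n ≥ t, the identity Σ_{τ=1}^{n−t+1} binom(n+τ−1, t−j−1)·binom(n−t+j−τ, j−1) = Σ_{τ=1}^{n−t+1} binom(n, t−j−τ)·binom(n−t+j, j+τ−1) holds. -/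
/-!
Put `a = t - j - 1`, `b = j - 1`, `m = n - t`. Expanding `C(n + i, a)` by Vandermonde turns the
left side into `∑_{u + r = a} C(n, r) ∑_{i + k = M} C(i, u) C(k, b)` with `M = m + b`, and the
inner sum is `C(M + 1, u + b + 1)`: choosing `u + b + 1` elements of `{0, …, M}` amounts to
choosing the `(u + 1)`-st of them, `u` elements below it and `b` above it. This is the right side.
-/

open Finset

namespace Nat

theorem sum_antidiagonal_choose_mul_choose (M u b : ℕ) :
    ∑ p ∈ antidiagonal M, p.1.choose u * p.2.choose b = (M + 1).choose (u + b + 1) := by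
  induction M generalizing u with
  | zero => rcases u with _ | u <;> rcases b with _ | b <;> simp [choose_eq_zero_of_lt]
  | succ M ih =>
    rw [Finset.Nat.sum_antidiagonal_succ]
    rcases u with _ | u
    · have ih0 := ih 0
      simp only [choose_zero_right, one_mul, zero_add] at ih0 ⊢
      rw [ih0, choose_succ_succ' (M + 1)]
    · simp only [choose_zero_succ, zero_mul, zero_add, choose_succ_succ' _ u, add_mul,
        sum_add_distrib, ih]
      rw [show u + 1 + b + 1 = u + b + 1 + 1 by ring, choose_succ_succ' (M + 1)]

theorem sum_antidiagonal_add_choose_mul_choose (n a b M : ℕ) :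
    ∑ p ∈ antidiagonal M, (n + p.1).choose a * p.2.choose b
      = ∑ q ∈ antidiagonal a, (M + 1).choose (q.1 + b + 1) * n.choose q.2 := by
  calc ∑ p ∈ antidiagonal M, (n + p.1).choose a * p.2.choose b
      = ∑ p ∈ antidiagonal M, ∑ q ∈ antidiagonal a,
          n.choose q.2 * (p.1.choose q.1 * p.2.choose b) := by
        refine sum_congr rfl fun p _ => ?_
        rw [add_comm, add_choose_eq, sum_mul]
        exact sum_congr rfl fun q _ => by ring
    _ = ∑ q ∈ antidiagonal a, n.choose q.2 * (M + 1).choose (q.1 + b + 1) := by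
        rw [sum_comm]
        simp only [← mul_sum, sum_antidiagonal_choose_mul_choose]
    _ = _ := sum_congr rfl fun q _ => mul_comm _ _

theorem sum_range_add_choose_mul_choose_sub (n a b m : ℕ) :
    ∑ i ∈ range (m + 1), (n + i).choose a * (m + b - i).choose b
      = ∑ i ∈ range (m + 1),
          (if i ≤ a then n.choose (a - i) else 0) * (m + b + 1).choose (i + b + 1) := by
  set f : ℕ → ℕ :=
    fun i => (if i ≤ a then n.choose (a - i) else 0) * (m + b + 1).choose (i + b + 1)
  calc ∑ i ∈ range (m + 1), (n + i).choose a * (m + b - i).choose b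
      = ∑ i ∈ range (m + b + 1), (n + i).choose a * (m + b - i).choose b :=
        sum_subset (range_subset_range.2 (by omega)) fun i hi hi' => by
          rw [mem_range] at hi hi'
          rw [choose_eq_zero_of_lt (by omega : m + b - i < b), mul_zero]
    _ = ∑ q ∈ antidiagonal a, (m + b + 1).choose (q.1 + b + 1) * n.choose q.2 := by
        rw [← sum_antidiagonal_add_choose_mul_choose,
          Finset.Nat.sum_antidiagonal_eq_sum_range_succ (fun i k => (n + i).choose a * k.choose b)]
    _ = ∑ i ∈ range (a + 1), f i := by
        rw [Finset.Nat.sum_antidiagonal_eq_sum_range_succ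
          (fun i r => (m + b + 1).choose (i + b + 1) * n.choose r)]
        refine sum_congr rfl fun i hi => ?_
        rw [mem_range] at hi
        simp only [f, if_pos (by omega : i ≤ a), mul_comm]
    _ = ∑ i ∈ range (m + 1), f i := by
        have hf_a : ∀ i ≥ a + 1, f i = 0 := fun i hi => by
          simp only [f, if_neg (by omega : ¬i ≤ a), zero_mul]
        have hf_m : ∀ i ≥ m + 1, f i = 0 := fun i hi => by
          simp only [f, choose_eq_zero_of_lt (by omega : m + b + 1 < i + b + 1), mul_zero]
        rw [← eventually_constant_sum hf_a (le_add_right (a + 1) (m + 1)),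
          eventually_constant_sum hf_m (by omega)]

end Nat

/-- The combinatorial identity between the second and third expressions for `ν_ℓ` in
Lemma 3.3(b): for `1 ≤ j ≤ t − 1` and `t ≤ n`,
`∑_{τ=1}^{n−t+1} C(n+τ−1, t−j−1)·C(n−t+j−τ, j−1)
  = ∑_{τ=1}^{n−t+1} C(n, t−j−τ)·C(n−t+j, j+τ−1)`,
with the convention that `C(α, β) = 0` when `β < 0` or `β > α`. -/
theorem nu_second_eq_third (n t j : ℕ) (htn : t ≤ n) (hj1 : 1 ≤ j) (hj2 : j ≤ t - 1) :
    ∑ τ ∈ Finset.Icc 1 (n - t + 1),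
        (n + τ - 1).choose (t - j - 1) * (n - t + j - τ).choose (j - 1)
      = ∑ τ ∈ Finset.Icc 1 (n - t + 1),
          (if τ ≤ t - j then n.choose (t - j - τ) else 0) * (n - t + j).choose (j + τ - 1) := by
  obtain ⟨b, rfl⟩ : ∃ b, j = b + 1 := ⟨j - 1, by omega⟩
  obtain ⟨a, rfl⟩ : ∃ a, t = a + b + 2 := ⟨t - b - 2, by omega⟩
  obtain ⟨m, hm⟩ : ∃ m, n = m + a + b + 2 := ⟨n - (a + b + 2), by omega⟩
  have shift (f : ℕ → ℕ) :
      ∑ τ ∈ Icc 1 (n - (a + b + 2) + 1), f τ = ∑ i ∈ range (m + 1), f (1 + i) := by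
    rw [← Ico_add_one_right_eq_Icc, sum_Ico_eq_sum_range,
      show n - (a + b + 2) + 1 + 1 - 1 = m + 1 by omega]
  rw [shift, shift]
  convert Nat.sum_range_add_choose_mul_choose_sub n a b m using 1
  · refine sum_congr rfl fun i _ => ?_
    congr 2 <;> omega
  · refine sum_congr rfl fun i _ => ?_
    split_ifs <;> first | omega | simp only [zero_mul] | congr 2 <;> omega
end

section
/- For q ≥ 6 and n ≥ 3, the sum Σ_i [binom(i−1, 2)·binom(i+2, q) + (i−2)·binom(i+1, q) + binom(i, q)]·binom(n, i) (sum over i from q−2 to n, with appropriate range conventions) equals binom(q+2, 2)·binom(n, q+2)·2^(n−q−2) + 4·binom(q+1, 2)·binom(n, q+1)·2^(n−q−1) + q(3q−4)·binom(n, q)·2^(n−q) + 2(q−1)(q−3)·binom(n, q−1)·2^(n−q+1) + binom(q−3, 2)·binom(n, q−2)·2^(n−q+2). -/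
/-!
Pascal's rule and the absorption identity `(k + 1) C(i, k + 1) = (i - k) C(i, k)` rewrite the
summand as a combination of `C(i, q + j)`, `-2 ≤ j ≤ 2`, with coefficients depending on `q` only.
Each `∑ᵢ C(i, m) C(n, i)` counts pairs `A ⊆ B ⊆ [n]` with `|A| = m`, so it equals `C(n, m) 2^(n - m)`.
-/

open Finset

theorem Nat.cast_choose_succ_right_eq {K : Type*} [Field K] [CharZero K] (i k : ℕ) :
    (i.choose (k + 1) : K) = i.choose k * (i - k) / (k + 1) := by
  rcases le_or_gt k i with hki | hik
  · rw [eq_div_iff (Nat.cast_add_one_ne_zero k), ← Nat.cast_sub hki]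
    exact_mod_cast Nat.choose_succ_right_eq i k
  · simp [Nat.choose_eq_zero_of_lt hik, Nat.choose_eq_zero_of_lt (hik.trans (Nat.lt_succ_self k))]

theorem sum_Icc_choose_mul_choose (n m : ℕ) :
    ∑ i ∈ Icc m n, i.choose m * n.choose i = n.choose m * 2 ^ (n - m) := by
  rcases le_or_gt m n with hmn | hnm
  · rw [← Ico_add_one_right_eq_Icc, sum_Ico_eq_sum_range, show n + 1 - m = n - m + 1 by omega,
      ← Nat.sum_range_choose, mul_sum]
    refine sum_congr rfl fun j _ => ?_
    rw [mul_comm, Nat.choose_mul le_self_add, Nat.add_sub_cancel_left]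
  · simp [Nat.choose_eq_zero_of_lt hnm, hnm]

theorem sum_Icc_choose_mul_choose_of_le {n m t : ℕ} (htm : t ≤ m) :
    ∑ i ∈ Icc t n, i.choose m * n.choose i = n.choose m * 2 ^ (n - m) := by
  rw [← sum_Icc_choose_mul_choose]
  refine (sum_subset (Icc_subset_Icc_left htm) fun i hi hi' => ?_).symm
  simp only [mem_Icc, not_and, not_le] at hi hi'
  rw [Nat.choose_eq_zero_of_lt (by omega : i < m), zero_mul]

theorem summand_eq_combination_of_choose {q i : ℕ} (hq : 3 ≤ q) (hi : 2 ≤ i) :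
    (i - 1).choose 2 * (i + 2).choose q + (i - 2) * (i + 1).choose q + i.choose q
      = (q + 2).choose 2 * i.choose (q + 2) + 4 * (q + 1).choose 2 * i.choose (q + 1)
        + q * (3 * q - 4) * i.choose q + 2 * (q - 1) * (q - 3) * i.choose (q - 1)
        + (q - 3).choose 2 * i.choose (q - 2) := by
  obtain ⟨p, rfl⟩ : ∃ p, q = p + 3 := ⟨q - 3, by omega⟩
  rw [show 3 * (p + 3) - 4 = 3 * p + 5 by omega, Nat.choose_succ_succ' (i + 1),
    Nat.choose_succ_succ' i, Nat.choose_succ_succ' i]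
  simp only [Nat.add_sub_cancel, show p + 3 - 1 = p + 2 by omega, show p + 3 - 2 = p + 1 by omega]
  rw [← Nat.cast_inj (R := ℚ)]
  push_cast [Nat.cast_choose_succ_right_eq, Nat.choose_zero_right, Nat.cast_sub hi,
    Nat.cast_sub (show 1 ≤ i by omega)]
  field_simp
  ring

theorem betti_J_n_sub_two_general (n q : ℕ) (hq : 6 ≤ q) :
    ∑ i ∈ Finset.Icc (q - 2) n,
        ((i - 1).choose 2 * (i + 2).choose q + (i - 2) * (i + 1).choose q + i.choose q)
          * n.choose i
      = (q + 2).choose 2 * n.choose (q + 2) * 2 ^ (n - (q + 2))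
          + 4 * (q + 1).choose 2 * n.choose (q + 1) * 2 ^ (n - (q + 1))
          + q * (3 * q - 4) * n.choose q * 2 ^ (n - q)
          + 2 * (q - 1) * (q - 3) * n.choose (q - 1) * 2 ^ (n + 1 - q)
          + (q - 3).choose 2 * n.choose (q - 2) * 2 ^ (n + 2 - q) := by
  calc _ = ∑ i ∈ Icc (q - 2) n,
        ((q + 2).choose 2 * (i.choose (q + 2) * n.choose i)
          + 4 * (q + 1).choose 2 * (i.choose (q + 1) * n.choose i)
          + q * (3 * q - 4) * (i.choose q * n.choose i)
          + 2 * (q - 1) * (q - 3) * (i.choose (q - 1) * n.choose i)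
          + (q - 3).choose 2 * (i.choose (q - 2) * n.choose i)) := by
        refine sum_congr rfl fun i hi => ?_
        rw [summand_eq_combination_of_choose (by omega) (by grind)]
        ring
    _ = _ := by
        simp only [sum_add_distrib, ← mul_sum]
        rw [sum_Icc_choose_mul_choose_of_le (by omega), sum_Icc_choose_mul_choose_of_le (by omega),
          sum_Icc_choose_mul_choose_of_le (by omega), sum_Icc_choose_mul_choose_of_le (by omega),
          sum_Icc_choose_mul_choose_of_le le_rfl, show n - (q - 1) = n + 1 - q by omega,
          show n - (q - 2) = n + 2 - q by omega]
        ring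

/-- The computation of `β_q(J_{n−2})` in the proof of Theorem 3.6 for `q ≥ 6`:
`∑_{i=q−2}^{n} [C(i−1, 2)·C(i+2, q) + (i−2)·C(i+1, q) + C(i, q)]·C(n, i)`
equals
`C(q+2, 2)·C(n, q+2)·2^(n−q−2) + 4·C(q+1, 2)·C(n, q+1)·2^(n−q−1)
 + q(3q−4)·C(n, q)·2^(n−q) + 2(q−1)(q−3)·C(n, q−1)·2^(n−q+1)
 + C(q−3, 2)·C(n, q−2)·2^(n−q+2)`. -/
theorem betti_J_n_sub_two (n q : ℕ) (hq : 6 ≤ q) (hn : 3 ≤ n) :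
    ∑ i ∈ Finset.Icc (q - 2) n,
        ((i - 1).choose 2 * (i + 2).choose q + (i - 2) * (i + 1).choose q + i.choose q)
          * n.choose i
      = (q + 2).choose 2 * n.choose (q + 2) * 2 ^ (n - (q + 2))
          + 4 * (q + 1).choose 2 * n.choose (q + 1) * 2 ^ (n - (q + 1))
          + q * (3 * q - 4) * n.choose q * 2 ^ (n - q)
          + 2 * (q - 1) * (q - 3) * n.choose (q - 1) * 2 ^ (n + 1 - q)
          + (q - 3).choose 2 * n.choose (q - 2) * 2 ^ (n + 2 - q) :=
  betti_J_n_sub_two_general n q hq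
end
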